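/- arXiv:1711.07270 — 6 statements merged into one kernel-verified Lean document; each statement's English description precedes it below -/
import Mathlib

section
/- The Thue-Morse sequence is overlap-free: it contains no factor of the form awawa where a is a single symbol and w is a (possibly empty) word. -/
/-!
From `t (2n) = t n` and `t (2n + 1) = t n + 1`: an overlap of even period `2q` at `i` is the
image of an overlap of period `q` at `⌊i/2⌋`, so by descent it suffices to exclude odd periods.
Period `1` means three equal consecutive letters, impossible since `t (2n) ≠ t (2n + 1)`. For an
odd period `p ≥ 3`, positions `k` and `k + p` have opposite parities; as `t` changes across every
pair `(2m, 2m + 1)`, it also changes across the shifted pair `(2m' + 1, 2m' + 2)`, which forces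
`t m' = t (m' + 1)`, and two consecutive such pairs give three equal consecutive letters again.
-/

open Fin.NatCast in
/-- The Thue-Morse sequence: parity of the number of 1 bits of `n`. -/
def thueMorse (n : ℕ) : Fin 2 := (n.bits.count true : Fin 2)

/-- `w` is the factor of the infinite sequence `s` starting at position `i`. -/
def FactorAt {α : Type*} (s : ℕ → α) (i : ℕ) (w : List α) : Prop :=
  w = (List.range w.length).map (fun j => s (i + j))

/-- `w` is a factor (contiguous finite subword) of the infinite sequence `s`. -/
def IsFactor {α : Type*} (s : ℕ → α) (w : List α) : Prop := ∃ i, FactorAt s i w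

section Overlap

variable {α : Type*} {s : ℕ → α} {i p : ℕ}

/-- The factor of length `2p + 1` at `i` has period `p`, i.e. it is an overlap `a·w·a·w·a`
with `|a·w| = p`. -/
def HasOverlapAt (s : ℕ → α) (i p : ℕ) : Prop :=
  0 < p ∧ ∀ j ≤ p, s (i + j) = s (i + j + p)

theorem FactorAt.getElem {u : List α} (h : FactorAt s i u) (j : ℕ) (hj : j < u.length) :
    u[j] = s (i + j) := by
  rw [List.getElem_of_eq h]
  simp

theorem FactorAt.hasOverlapAt {a : α} {w : List α}
    (h : FactorAt s i ([a] ++ w ++ [a] ++ w ++ [a])) : HasOverlapAt s i (w.length + 1) := by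
  refine ⟨w.length.succ_pos, fun j hj => ?_⟩
  set u := [a] ++ w ++ [a] ++ w ++ [a]
  set v := a :: w ++ [a]
  have hj' : j < v.length := by simp [v]; omega
  have hpre : v <+: u := ⟨w ++ [a], by simp [u, v]⟩
  have hsuf : u = (a :: w) ++ v := by simp [u, v]
  have hlen : u.length = 2 * (w.length + 1) + 1 := by simp [u]; ring
  calc s (i + j) = v[j] := by rw [hpre.getElem hj', h.getElem]
    _ = u[j + (w.length + 1)] := by
      rw [List.getElem_of_eq hsuf, List.getElem_append_right' (a :: w) hj']; rfl
    _ = s (i + j + (w.length + 1)) := by rw [h.getElem, add_assoc]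

theorem HasOverlapAt.ne_succ_iff (h : HasOverlapAt s i p) {j : ℕ} (hj : j < p) :
    s (i + j) ≠ s (i + j + 1) ↔ s (i + j + p) ≠ s (i + j + p + 1) := by
  rw [h.2 j hj.le, show i + j + 1 = i + (j + 1) by ring, h.2 (j + 1) hj]
  ring_nf

end Overlap

theorem thueMorse_two_mul (n : ℕ) : thueMorse (2 * n) = thueMorse n := by
  rcases eq_or_ne n 0 with rfl | hn
  · rfl
  · simp [thueMorse, Nat.bit0_bits n hn]

open Fin.NatCast in
theorem thueMorse_two_mul_add_one (n : ℕ) : thueMorse (2 * n + 1) = thueMorse n + 1 := by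
  simp only [thueMorse, Nat.bit1_bits, List.count_cons_self]
  exact Nat.cast_succ _

theorem thueMorse_two_mul_ne (n : ℕ) : thueMorse (2 * n) ≠ thueMorse (2 * n + 1) := by
  rw [thueMorse_two_mul, thueMorse_two_mul_add_one]
  exact (add_ne_left.mpr one_ne_zero).symm

theorem thueMorse_two_mul_add_one_ne_iff (n : ℕ) :
    thueMorse (2 * n + 1) ≠ thueMorse (2 * n + 2) ↔ thueMorse n = thueMorse (n + 1) := by
  rw [show 2 * n + 2 = 2 * (n + 1) by ring, thueMorse_two_mul, thueMorse_two_mul_add_one]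
  exact (by decide : ∀ x y : Fin 2, x + 1 ≠ y ↔ x = y) _ _

theorem thueMorse_not_three_eq (m : ℕ) :
    ¬ (thueMorse m = thueMorse (m + 1) ∧ thueMorse (m + 1) = thueMorse (m + 2)) := by
  rintro ⟨h₁, h₂⟩
  obtain ⟨n, rfl | rfl⟩ := Nat.even_or_odd' m
  · exact thueMorse_two_mul_ne n h₁
  · exact thueMorse_two_mul_ne (n + 1) h₂

theorem thueMorse_hasOverlapAt_div_two {i q : ℕ} (h : HasOverlapAt thueMorse i (2 * q)) :
    HasOverlapAt thueMorse (i / 2) q := by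
  refine ⟨by linarith [h.1], fun j hj => ?_⟩
  have hj' := h.2 (2 * j) (by omega)
  obtain ⟨n, rfl | rfl⟩ := Nat.even_or_odd' i
  · rw [show 2 * n + 2 * j = 2 * (n + j) by ring, show 2 * (n + j) + 2 * q = 2 * (n + j + q) by ring,
      thueMorse_two_mul, thueMorse_two_mul] at hj'
    simpa using hj'
  · rw [show 2 * n + 1 + 2 * j = 2 * (n + j) + 1 by ring,
      show 2 * (n + j) + 1 + 2 * q = 2 * (n + j + q) + 1 by ring,
      thueMorse_two_mul_add_one, thueMorse_two_mul_add_one] at hj'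
    rw [show (2 * n + 1) / 2 = n by omega]
    exact add_right_cancel hj'

theorem thueMorse_not_hasOverlapAt_odd (i q : ℕ) : ¬ HasOverlapAt thueMorse i (2 * q + 1) := by
  intro h
  rcases q.eq_zero_or_pos with rfl | hq
  · exact thueMorse_not_three_eq i ⟨h.2 0 (by norm_num), h.2 1 (by norm_num)⟩
  obtain ⟨n, rfl | rfl⟩ := Nat.even_or_odd' i
  · have heq_succ : ∀ l ≤ 1, thueMorse (n + q + l) = thueMorse (n + q + l + 1) := by
      intro l hl
      have hne := (h.ne_succ_iff (j := 2 * l) (by omega)).mp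
        (by rw [← mul_add]; exact thueMorse_two_mul_ne (n + l))
      rw [show 2 * n + 2 * l + (2 * q + 1) = 2 * (n + q + l) + 1 by ring] at hne
      exact (thueMorse_two_mul_add_one_ne_iff _).mp hne
    exact thueMorse_not_three_eq (n + q) ⟨heq_succ 0 zero_le_one, heq_succ 1 le_rfl⟩
  · have heq_succ : ∀ l ≤ 1, thueMorse (n + l) = thueMorse (n + l + 1) := by
      intro l hl
      have hne := (h.ne_succ_iff (j := 2 * l) (by omega)).mpr
        (by rw [show 2 * n + 1 + 2 * l + (2 * q + 1) = 2 * (n + q + l + 1) by ring]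
            exact thueMorse_two_mul_ne _)
      rw [show 2 * n + 1 + 2 * l = 2 * (n + l) + 1 by ring] at hne
      exact (thueMorse_two_mul_add_one_ne_iff _).mp hne
    exact thueMorse_not_three_eq n ⟨heq_succ 0 zero_le_one, heq_succ 1 le_rfl⟩

theorem thueMorse_not_hasOverlapAt (i p : ℕ) : ¬ HasOverlapAt thueMorse i p := by
  induction p using Nat.strong_induction_on generalizing i with
  | _ p ih =>
    intro h
    obtain ⟨q, rfl | rfl⟩ := Nat.even_or_odd' p
    · exact ih q (by linarith [h.1]) (i / 2) (thueMorse_hasOverlapAt_div_two h)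
    · exact thueMorse_not_hasOverlapAt_odd i q h

/-- the Thue–Morse sequence is overlap-free: it contains no factor
of the form `a·w·a·w·a` with `a` a single symbol and `w` a (possibly empty) word. -/
theorem thueMorse_overlapFree :
    ¬ ∃ (a : Fin 2) (w : List (Fin 2)),
      IsFactor thueMorse ([a] ++ w ++ [a] ++ w ++ [a]) := by
  rintro ⟨a, w, i, h⟩
  exact thueMorse_not_hasOverlapAt i _ h.hasOverlapAt
end

section
/- The first-difference sequence of the Thue-Morse sequence is squarefree: it contains no nonempty factor of the form ww. -/
/-- The Thue-Morse sequence, with values in `ℤ`. -/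
def thueMorseZ (n : ℕ) : ℤ := (n.bits.count true) % 2

lemma tm_range (n : ℕ) : thueMorseZ n = 0 ∨ thueMorseZ n = 1 := by
  unfold thueMorseZ; omega

lemma tm_two_mul (k : ℕ) : thueMorseZ (2 * k) = thueMorseZ k := by
  rcases Nat.eq_zero_or_pos k with h | h
  · subst h; rfl
  · unfold thueMorseZ
    rw [Nat.bit0_bits k h.ne', List.count_cons]
    norm_num

lemma tm_two_mul_add_one (k : ℕ) : thueMorseZ (2 * k + 1) = 1 - thueMorseZ k := by
  unfold thueMorseZ
  rw [Nat.bit1_bits k, List.count_cons]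
  norm_num
  omega

lemma eq_adj_odd {m : ℕ} (h : thueMorseZ m = thueMorseZ (m + 1)) : m % 2 = 1 := by
  rcases Nat.even_or_odd m with ⟨k, hk⟩ | ⟨k, hk⟩
  · exfalso
    subst hk
    rw [show k + k = 2 * k by ring] at h
    rw [tm_two_mul, tm_two_mul_add_one] at h
    have := tm_range k
    omega
  · omega

lemma no_overlap : ∀ n, 1 ≤ n → ∀ i, ¬ (∀ j ≤ n, thueMorseZ (i + j) = thueMorseZ (i + n + j)) := by
  intro n
  induction n using Nat.strong_induction_on with
  | _ n IH =>
  intro hn i H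
  rcases eq_or_lt_of_le hn with h1 | h1
  · -- n = 1
    have e0 := H 0 (by omega)
    have e1 := H 1 (by omega)
    rw [← h1] at e0 e1
    have o0 : i % 2 = 1 := eq_adj_odd (by simpa using e0)
    have o1 : (i + 1) % 2 = 1 := eq_adj_odd (by rw [show i+1+1 = i+2 by ring]; simpa [show i+1+0 = i+1 by ring, show i+1+1=i+2 by ring] using e1)
    omega
  · rcases Nat.even_or_odd n with ⟨m, hm⟩ | ⟨m, hm⟩
    · -- n = 2m, m ≥ 1
      have hm2 : n = 2 * m := by omega
      have hmlt : m < n := by omega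
      have hm1 : 1 ≤ m := by omega
      rcases Nat.even_or_odd i with ⟨a, ha⟩ | ⟨a, ha⟩
      · have ha2 : i = 2 * a := by omega
        apply IH m hmlt hm1 a
        intro l hl
        have := H (2 * l) (by omega)
        rw [ha2, hm2, show 2*a + 2*l = 2*(a+l) by ring,
            show 2*a + 2*m + 2*l = 2*(a+m+l) by ring, tm_two_mul, tm_two_mul] at this
        exact this
      · have ha2 : i = 2 * a + 1 := by omega
        apply IH m hmlt hm1 a
        intro l hl
        have := H (2 * l) (by omega)
        rw [ha2, hm2, show 2*a+1 + 2*l = 2*(a+l)+1 by ring,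
            show 2*a+1 + 2*m + 2*l = 2*(a+m+l)+1 by ring,
            tm_two_mul_add_one, tm_two_mul_add_one] at this
        have := this
        linarith
    · -- n odd, n ≥ 3
      have hn3 : 3 ≤ n := by omega
      -- alternation on [i, i+2n]
      have alt : ∀ j, j ≤ 2 * n - 1 → thueMorseZ (i + j) ≠ thueMorseZ (i + j + 1) := by
        have alt1 : ∀ j, j ≤ n - 1 → thueMorseZ (i + j) ≠ thueMorseZ (i + j + 1) := by
          intro j hj heq
          have e0 := H j (by omega)
          have e1 := H (j+1) (by omega)
          have heq2 : thueMorseZ (i + n + j) = thueMorseZ (i + n + j + 1) := by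
            rw [← e0, show i + n + j + 1 = i + n + (j+1) by ring, ← e1,
                show i + (j+1) = i + j + 1 by ring]
            exact heq
          have o0 := eq_adj_odd heq
          have o1 := eq_adj_odd heq2
          omega
        intro j hj
        rcases le_or_gt j (n - 1) with h | h
        · exact alt1 j h
        · intro heq
          have e0 := H (j - n) (by omega)
          have e1 := H (j - n + 1) (by omega)
          rw [show i + n + (j - n) = i + j by omega] at e0
          rw [show i + n + (j - n + 1) = i + j + 1 by omega] at e1
          apply alt1 (j - n) (by omega)
          rw [show i + (j - n) + 1 = i + (j - n + 1) by ring, e0, e1, heq]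
      -- pick even p ∈ {i, i+1}
      obtain ⟨k, hp⟩ : ∃ k, 2 * k = i ∨ 2 * k = i + 1 := by
        rcases Nat.even_or_odd i with ⟨a, ha⟩ | ⟨a, ha⟩
        · exact ⟨a, Or.inl (by omega)⟩
        · exact ⟨a + 1, Or.inr (by omega)⟩
      have hple : 2 * k + 4 ≤ i + 2 * n := by omega
      have a0 := alt (2*k - i) (by omega)
      have a1 := alt (2*k - i + 1) (by omega)
      have a2 := alt (2*k - i + 2) (by omega)
      have a3 := alt (2*k - i + 3) (by omega)
      rw [show i + (2*k - i) + 1 = 2*k+1 by omega, show i + (2*k - i) = 2*k by omega] at a0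
      rw [show i + (2*k - i + 1) + 1 = 2*k+2 by omega, show i + (2*k - i + 1) = 2*k+1 by omega] at a1
      rw [show i + (2*k - i + 2) + 1 = 2*k+3 by omega, show i + (2*k - i + 2) = 2*k+2 by omega] at a2
      rw [show i + (2*k - i + 3) + 1 = 2*k+4 by omega, show i + (2*k - i + 3) = 2*k+3 by omega] at a3
      have r0 := tm_range (2*k); have r1 := tm_range (2*k+1)
      have r2 := tm_range (2*k+2); have r3 := tm_range (2*k+3); have r4 := tm_range (2*k+4)
      have e02 : thueMorseZ (2*k) = thueMorseZ (2*k+2) := by omega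
      have e24 : thueMorseZ (2*k+2) = thueMorseZ (2*k+4) := by omega
      rw [tm_two_mul, show 2*k+2 = 2*(k+1) by ring, tm_two_mul] at e02
      rw [show 2*k+2 = 2*(k+1) by ring, show 2*k+4 = 2*(k+2) by ring, tm_two_mul, tm_two_mul] at e24
      have o0 := eq_adj_odd e02
      have o1 := eq_adj_odd (by rw [show k+1+1 = k+2 by ring]; exact e24)
      omega

/-- The first-difference (Diff-Thue-Morse) sequence. -/
def diffThueMorse (n : ℕ) : ℤ := thueMorseZ (n + 1) - thueMorseZ n

/-- the first-difference sequence of the Thue–Morse sequence is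
squarefree: it contains no nonempty factor of the form `w·w`. -/
theorem diffThueMorse_squarefree :
    ¬ ∃ w : List ℤ, w ≠ [] ∧ IsFactor diffThueMorse (w ++ w) := by
  rintro ⟨w, hw, i, hf⟩
  set n := w.length with hn
  have hn1 : 1 ≤ n := List.length_pos_iff.mpr hw
  unfold FactorAt at hf
  have key : ∀ j < n, diffThueMorse (i + j) = diffThueMorse (i + n + j) := by
    intro j hj
    have hj1 : j < (w ++ w).length := by simp [← hn]; omega
    have hj2 : n + j < (w ++ w).length := by simp [← hn]; omega
    have h1 : (w ++ w)[j]'hj1 = diffThueMorse (i + j) := by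
      rw [List.getElem_of_eq hf hj1]
      simp
    have h2 : (w ++ w)[n + j]'hj2 = diffThueMorse (i + (n + j)) := by
      rw [List.getElem_of_eq hf hj2]
      simp
    have h3 : (w ++ w)[j]'hj1 = w[j]'hj :=
      List.getElem_append_left hj
    have h4 : (w ++ w)[n + j]'hj2 = w[j]'hj := by
      rw [List.getElem_append_right (by omega)]
      congr 1
      omega
    rw [show i + n + j = i + (n + j) by ring, ← h1, ← h2, h3, h4]
  have tel : ∀ j ≤ n, thueMorseZ (i + n + j) - thueMorseZ (i + n) =
      thueMorseZ (i + j) - thueMorseZ i := by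
    intro j hj
    induction j with
    | zero => simp
    | succ j ih =>
      have hd := key j (by omega)
      unfold diffThueMorse at hd
      have ihj := ih (by omega)
      rw [show i + (j+1) = i + j + 1 by ring, show i + n + (j+1) = i + n + j + 1 by ring]
      omega
  have r0 := tm_range i
  have rn := tm_range (i + n)
  have r2 := tm_range (i + n + n)
  have tn := tel n le_rfl
  by_cases hc : thueMorseZ (i + n) = thueMorseZ i
  · apply no_overlap n hn1 i
    intro j hj
    have := tel j hj
    omega
  · omega
end

section
/- If an infinite binary sequence s is overlap-free, then its first-difference sequence d(n) = s(n+1) - s(n) (with values in {-1,0,1}) is squarefree. -/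
/-- if an infinite binary sequence `s` (values in `{0,1} ⊆ ℤ`) is
overlap-free, then its first-difference sequence `d n = s (n+1) - s n` is
squarefree. -/
theorem diff_squarefree_of_overlapFree (s : ℕ → ℤ)
    (hbin : ∀ n, s n = 0 ∨ s n = 1)
    (hov : ¬ ∃ (a : ℤ) (w : List ℤ), IsFactor s ([a] ++ w ++ [a] ++ w ++ [a])) :
    ¬ ∃ w : List ℤ, w ≠ [] ∧ IsFactor (fun n => s (n + 1) - s n) (w ++ w) := by
  rintro ⟨w, hw, i, hF⟩
  set k := w.length with hk
  have hkpos : 0 < k := List.length_pos_iff.mpr hw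
  unfold FactorAt at hF
  have hlen : (w ++ w).length = k + k := by simp [hk]
  -- getElem? of the square
  have hD : ∀ j, j < k + k → (w ++ w)[j]? = some (s (i + j + 1) - s (i + j)) := by
    intro j hj
    rw [hF]
    simp [hlen, hj]
  have key : ∀ j, j < k → s (i + j + 1) - s (i + j) = s (i + k + j + 1) - s (i + k + j) := by
    intro j hj
    have h1 : (w ++ w)[j]? = some (s (i + j + 1) - s (i + j)) := hD j (by omega)
    have h2 : (w ++ w)[k + j]? = some (s (i + (k + j) + 1) - s (i + (k + j))) :=
      hD (k + j) (by omega)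
    have e1 : (w ++ w)[j]? = w[j]? := List.getElem?_append_left (by omega)
    have e2 : (w ++ w)[k + j]? = w[j]? := by
      rw [List.getElem?_append_right (by omega)]
      simp [hk]
    rw [e1] at h1
    rw [e2] at h2
    rw [h1] at h2
    have := Option.some.inj h2
    have harr : i + (k + j) = i + k + j := by omega
    rw [harr] at this
    linarith
  -- telescoping
  have tele : ∀ j, j ≤ k → s (i + k + j) - s (i + j) = s (i + k) - s i := by
    intro j hj
    induction j with
    | zero => simp
    | succ n ih =>
      have hn : n < k := by omega
      have ihn := ih (by omega)
      have hkey := key n hn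
      have e1 : i + k + (n + 1) = i + k + n + 1 := by omega
      have e2 : i + (n + 1) = i + n + 1 := by omega
      rw [e1, e2]
      linarith
  have heq : s (i + k) = s i := by
    have h1 := tele k le_rfl
    rcases hbin i with h | h <;> rcases hbin (i + k) with h' | h' <;>
      rcases hbin (i + k + k) with h'' | h'' <;> omega
  have hper : ∀ j, j ≤ k → s (i + k + j) = s (i + j) := by
    intro j hj
    have := tele j hj
    rw [heq] at this
    linarith
  -- construct the overlap
  apply hov
  set g : ℕ → ℤ := fun j => s (i + j) with hg
  refine ⟨s i, (List.range (k - 1)).map (fun j => g (j + 1)), i, ?_⟩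
  set w' : List ℤ := (List.range (k - 1)).map (fun j => g (j + 1)) with hw'
  have hw'len : w'.length = k - 1 := by simp [hw']
  have hP : (List.range k).map g = s i :: w' := by
    have hk1 : k = (k - 1) + 1 := by omega
    rw [hk1, List.range_succ_eq_map, List.map_cons, List.map_map]
    have : g 0 = s i := by simp [hg]
    rw [this]
    congr 1
  have hQ : (List.range (k + (k + 1))).map g = (s i :: w') ++ ((s i :: w') ++ [s i]) := by
    rw [List.range_add, List.map_append, List.map_map]
    have h2 : (List.range (k + 1)).map (g ∘ (fun x => k + x)) = (List.range (k + 1)).map g := by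
      apply List.map_congr_left
      intro x hx
      have hx' : x ≤ k := by
        have := List.mem_range.mp hx; omega
      simp only [Function.comp]
      show s (i + (k + x)) = s (i + x)
      have : i + (k + x) = i + k + x := by omega
      rw [this]
      exact hper x hx'
    rw [h2]
    have h3 : (List.range (k + 1)).map g = ((List.range k).map g) ++ [g k] := by
      rw [List.range_succ, List.map_append]
      simp
    rw [h3, hP]
    have : g k = s i := by
      show s (i + k) = s i
      exact heq
    rw [this]
  show FactorAt s i _
  unfold FactorAt
  have hlen2 : ([s i] ++ w' ++ [s i] ++ w' ++ [s i]).length = k + (k + 1) := by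
    simp [hw'len]; omega
  rw [hlen2, hQ]
  simp
end

section
/- Let s be a string and d its difference string, d(i) = s(i+1) - s(i). If the LZ77 parse (without overlaps) of s has z phrases, then the LZ77 parse (without overlaps) of d has at most 2z phrases. -/
variable {α : Type*} [DecidableEq α]

/-- The length of the next greedy LZ77 phrase without overlaps: the largest
`L` such that the length-`L` prefix of the remainder `t` occurs as a substring
of the already-parsed prefix `p` (`0` if there is none). -/
def lzNoLen (p t : List α) : ℕ :=
  Nat.findGreatest (fun L => 0 < L ∧ (t.take L) <:+: p) t.length

/-- Greedy LZ77 without overlaps: `p` is the already parsed prefix, `r` the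
remainder. Each phrase is the longest nonempty prefix of `r` occurring
entirely earlier, or else a single fresh symbol. -/
def lzNoAux (p r : List α) : List (List α) :=
  match r with
  | [] => []
  | a :: r' =>
    if hL : lzNoLen p (a :: r') = 0 then [a] :: lzNoAux (p ++ [a]) r'
    else ((a :: r').take (lzNoLen p (a :: r'))) ::
      lzNoAux (p ++ (a :: r').take (lzNoLen p (a :: r'))) ((a :: r').drop (lzNoLen p (a :: r')))
termination_by r.length
decreasing_by
  · simp
  · have := Nat.pos_of_ne_zero hL
    simp only [List.length_drop, List.length_cons]
    omega

/-- The greedy LZ77 parse without overlaps. -/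
def lzNo (s : List α) : List (List α) := lzNoAux [] s

/-- The length of the next greedy LZ77 phrase with overlaps: the largest `L`
such that the length-`L` prefix of the remainder `t` can be copied from a
source occurrence starting strictly before position `|p|` (possibly
overlapping the phrase itself). -/
def lzOvLen (p t : List α) : ℕ :=
  Nat.findGreatest
    (fun L => 0 < L ∧ ∃ j < p.length, ((p ++ t.take L).drop j).take L = t.take L)
    t.length

/-- Greedy LZ77 with overlaps between phrases and their sources. -/
def lzOvAux (p r : List α) : List (List α) :=
  match r with
  | [] => []
  | a :: r' =>
    if hL : lzOvLen p (a :: r') = 0 then [a] :: lzOvAux (p ++ [a]) r'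
    else ((a :: r').take (lzOvLen p (a :: r'))) ::
      lzOvAux (p ++ (a :: r').take (lzOvLen p (a :: r'))) ((a :: r').drop (lzOvLen p (a :: r')))
termination_by r.length
decreasing_by
  · simp
  · have := Nat.pos_of_ne_zero hL
    simp only [List.length_drop, List.length_cons]
    omega

/-- The greedy LZ77 parse with overlaps. -/
def lzOv (s : List α) : List (List α) := lzOvAux [] s

/-!
Cut each phrase `s[k, k+m)` of a parse of `s` at its last position: the differences
`d[k, k+m-1)` inside the phrase are the differences of a copied factor of `s[0, k)`, hence
form a factor of `d[0, k)`, and what remains is the single symbol `d[k+m-1]`. This turns a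
parse of `s` into a valid parse of `d` with at most twice as many phrases, and the greedy
parse is no longer than any valid parse: a greedy parse started further to the right never
needs more phrases.
-/

section ZipWithTail

variable {β γ : Type*} (g : β → β → γ)

def zipWithTail (l : List β) : List γ := List.zipWith g l l.tail

@[simp]
lemma length_zipWithTail (l : List β) : (zipWithTail g l).length = l.length - 1 := by
  simp [zipWithTail]

lemma zipWithTail_drop (l : List β) (n : ℕ) :
    zipWithTail g (l.drop n) = (zipWithTail g l).drop n := by
  simp only [zipWithTail, List.drop_zipWith, List.tail_drop, List.drop_tail]

lemma zipWithTail_take (l : List β) (n : ℕ) :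
    zipWithTail g (l.take (n + 1)) = (zipWithTail g l).take n := by
  apply List.ext_getElem
  · simp only [length_zipWithTail, List.length_take]; omega
  · intro i _ _
    simp [zipWithTail]

variable {g}

lemma List.IsPrefix.zipWithTail {l₁ l₂ : List β} (h : l₁ <+: l₂) :
    zipWithTail g l₁ <+: zipWithTail g l₂ := by
  rw [List.prefix_iff_eq_take.mp h]
  rcases Nat.eq_zero_or_eq_succ_pred l₁.length with h0 | hsucc
  · simp [h0, _root_.zipWithTail]
  · rw [hsucc, zipWithTail_take]
    exact List.take_prefix _ _

lemma List.IsSuffix.zipWithTail {l₁ l₂ : List β} (h : l₁ <:+ l₂) :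
    zipWithTail g l₁ <:+ zipWithTail g l₂ := by
  rw [List.suffix_iff_eq_drop.mp h, zipWithTail_drop]
  exact List.drop_suffix _ _

lemma List.IsInfix.zipWithTail {l₁ l₂ : List β} (h : l₁ <:+: l₂) :
    zipWithTail g l₁ <:+: zipWithTail g l₂ := by
  obtain ⟨t, h₁, h₂⟩ := List.infix_iff_prefix_suffix.mp h
  exact List.infix_iff_prefix_suffix.mpr ⟨_, h₁.zipWithTail, h₂.zipWithTail⟩

end ZipWithTail

section Parse

variable {β γ : Type*}

def IsLzNoPhrase (p f : List β) : Prop := f ≠ [] ∧ (f.length = 1 ∨ f <:+: p)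

def IsLzNoParse (p : List β) : List (List β) → Prop
  | [] => True
  | f :: F => IsLzNoPhrase p f ∧ IsLzNoParse (p ++ f) F

def LzNoParsable (p r : List β) (n : ℕ) : Prop :=
  ∃ F, IsLzNoParse p F ∧ F.flatten = r ∧ F.length ≤ n

lemma lzNoParsable_nil (p : List β) (n : ℕ) : LzNoParsable p [] n :=
  ⟨[], trivial, rfl, Nat.zero_le n⟩

lemma LzNoParsable.mono {p r : List β} {m n : ℕ} (h : LzNoParsable p r m) (hmn : m ≤ n) :
    LzNoParsable p r n :=
  let ⟨F, hF, hflat, hlen⟩ := h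
  ⟨F, hF, hflat, hlen.trans hmn⟩

lemma isLzNoParse_append {p : List β} {F G : List (List β)} (hF : IsLzNoParse p F)
    (hG : IsLzNoParse (p ++ F.flatten) G) : IsLzNoParse p (F ++ G) := by
  induction F generalizing p with
  | nil => simpa using hG
  | cons f F ih =>
    exact ⟨hF.1, ih hF.2 (by simpa [List.append_assoc] using hG)⟩

lemma LzNoParsable.append {p x y : List β} {m n : ℕ} (hx : LzNoParsable p x m)
    (hy : LzNoParsable (p ++ x) y n) : LzNoParsable p (x ++ y) (m + n) := by
  obtain ⟨F, hF, rfl, hFlen⟩ := hx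
  obtain ⟨G, hG, rfl, hGlen⟩ := hy
  exact ⟨F ++ G, isLzNoParse_append hF hG, by simp, by simp; omega⟩

lemma IsLzNoPhrase.lzNoParsable {p f : List β} (hf : IsLzNoPhrase p f) : LzNoParsable p f 1 :=
  ⟨[f], ⟨hf, trivial⟩, by simp, le_rfl⟩

lemma lzNoParsable_of_length_le_one (p : List β) {x : List β} (hx : x.length ≤ 1) :
    LzNoParsable p x 1 := by
  rcases eq_or_ne x [] with rfl | hne
  · exact lzNoParsable_nil p 1
  · have := List.length_pos_iff.mpr hne
    exact IsLzNoPhrase.lzNoParsable ⟨hne, Or.inl (by omega)⟩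

lemma List.IsInfix.lzNoParsable {p x : List β} (hx : x <:+: p) : LzNoParsable p x 1 := by
  rcases eq_or_ne x [] with rfl | hne
  · exact lzNoParsable_nil p 1
  · exact IsLzNoPhrase.lzNoParsable ⟨hne, Or.inr hx⟩

lemma lzNoParsable_drop_of_isLzNoParse {s : List β} {t : List γ} {c : ℕ}
    (hlen : t.length ≤ s.length)
    (hphrase : ∀ k f, IsLzNoPhrase (s.take k) f → f <+: s.drop k →
      LzNoParsable (t.take k) ((t.drop k).take f.length) c)
    {k : ℕ} {F : List (List β)} (hF : IsLzNoParse (s.take k) F) (hflat : F.flatten = s.drop k) :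
    LzNoParsable (t.take k) (t.drop k) (c * F.length) := by
  induction F generalizing k with
  | nil =>
    have : s.length ≤ k := List.drop_eq_nil_iff.mp hflat.symm
    simpa [List.drop_eq_nil_of_le (hlen.trans this)] using lzNoParsable_nil (t.take k) 0
  | cons f F ih =>
    obtain ⟨hf, hF⟩ := hF
    have hpre : f <+: s.drop k := ⟨_, hflat⟩
    have htake : s.take k ++ f = s.take (k + f.length) := by
      rw [List.take_add, ← List.prefix_iff_eq_take.mp hpre]
    have hdrop : F.flatten = s.drop (k + f.length) := by
      rw [← List.drop_drop, ← hflat]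
      simp
    have h := (hphrase k f hf hpre).append
      (by rw [← List.take_add]; exact ih (htake ▸ hF) hdrop)
    rw [← List.drop_drop, List.take_append_drop] at h
    exact h.mono (by rw [List.length_cons, Nat.mul_succ, Nat.add_comm])

lemma IsLzNoPhrase.zipWithTail_infix (g : β → β → γ) {p f : List β}
    (hf : IsLzNoPhrase p f) :
    zipWithTail g f <:+: zipWithTail g p := by
  rcases hf.2 with hone | hcopy
  · simp [List.eq_nil_of_length_eq_zero (by simp [hone] : (zipWithTail g f).length = 0)]
  · exact hcopy.zipWithTail

/-- The differences inside a copied phrase are copied as well; only the difference across the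
phrase's right end may be new. -/
lemma lzNoParsable_zipWithTail_phrase (g : β → β → γ) {s f : List β} {k : ℕ}
    (hf : IsLzNoPhrase (s.take k) f) (hpre : f <+: s.drop k) :
    LzNoParsable ((zipWithTail g s).take k) (((zipWithTail g s).drop k).take f.length) 2 := by
  obtain ⟨m, hm⟩ := Nat.exists_eq_add_one_of_ne_zero (List.length_pos_iff.mpr hf.1).ne'
  have hsplit : ((zipWithTail g s).drop k).take f.length
      = zipWithTail g f ++ (((zipWithTail g s).drop k).drop m).take 1 := by
    rw [hm, List.take_add, List.prefix_iff_eq_take.mp hpre, hm, zipWithTail_take,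
      zipWithTail_drop]
  have hcopy : zipWithTail g f <:+: (zipWithTail g s).take k := by
    refine (hf.zipWithTail_infix g).trans ?_
    rw [← zipWithTail_take]
    exact (List.take_prefix_take_left k.le_succ).zipWithTail.isInfix
  rw [hsplit]
  exact hcopy.lzNoParsable.append (lzNoParsable_of_length_le_one _ (by simp))

lemma LzNoParsable.zipWithTail (g : β → β → γ) {s : List β} {n : ℕ}
    (h : LzNoParsable [] s n) :
    LzNoParsable [] (zipWithTail g s) (2 * n) := by
  obtain ⟨F, hF, hflat, hlen⟩ := h
  have h := lzNoParsable_drop_of_isLzNoParse (k := 0) (by simp)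
    (fun _ _ hf hpre => lzNoParsable_zipWithTail_phrase g hf hpre)
    (by simpa using hF) (by simpa using hflat)
  simpa using h.mono (Nat.mul_le_mul_left 2 hlen)

end Parse

@[simp]
lemma lzNoAux_nil (p : List α) : lzNoAux p [] = [] := by
  rw [lzNoAux]

/-- `max _ 1`: a phrase with no earlier occurrence is a single fresh symbol. -/
def lzNoPhrase (p r : List α) : List α := r.take (max (lzNoLen p r) 1)

lemma lzNoPhrase_prefix (p r : List α) : lzNoPhrase p r <+: r := List.take_prefix _ _

lemma lzNoAux_of_append {p r r₁ : List α} (hr : r ≠ []) (h : lzNoPhrase p r ++ r₁ = r) :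
    lzNoAux p r = lzNoPhrase p r :: lzNoAux (p ++ lzNoPhrase p r) r₁ := by
  obtain rfl : r₁ = r.drop (max (lzNoLen p r) 1) :=
    List.append_cancel_left (h.trans (List.take_append_drop _ _).symm)
  obtain ⟨a, r', rfl⟩ := List.exists_cons_of_ne_nil hr
  rw [lzNoAux]
  by_cases hL : lzNoLen p (a :: r') = 0
  · simp [lzNoPhrase, hL]
  · simp [lzNoPhrase, hL, max_eq_left (Nat.one_le_iff_ne_zero.mpr hL)]

lemma isLzNoPhrase_lzNoPhrase (p : List α) {r : List α} (hr : r ≠ []) :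
    IsLzNoPhrase p (lzNoPhrase p r) := by
  have hlen : 0 < r.length := List.length_pos_iff.mpr hr
  refine ⟨by simp [lzNoPhrase, hr], ?_⟩
  by_cases hL : lzNoLen p r = 0
  · left
    simp only [lzNoPhrase, hL, zero_le, sup_of_le_right, List.length_take, inf_eq_left]
    omega
  · right
    rw [lzNoPhrase, max_eq_left (Nat.one_le_iff_ne_zero.mpr hL)]
    exact (Nat.findGreatest_of_ne_zero rfl hL).2

lemma IsLzNoPhrase.prefix_lzNoPhrase {p f r : List α} (hf : IsLzNoPhrase p f) (h : f <+: r) :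
    f <+: lzNoPhrase p r := by
  refine List.prefix_take_iff.mpr ⟨h, ?_⟩
  rcases hf with ⟨hne, hone | hcopy⟩
  · exact hone ▸ le_max_right _ _
  · refine le_max_of_le_left (Nat.le_findGreatest h.length_le ⟨?_, ?_⟩)
    · exact List.length_pos_iff.mpr hne
    · rwa [← List.prefix_iff_eq_take.mp h]

lemma lzNoParsable_lzNoAux (p r : List α) : LzNoParsable p r (lzNoAux p r).length := by
  rcases eq_or_ne r [] with rfl | hr
  · simpa using lzNoParsable_nil p 0
  obtain ⟨r₁, hr₁⟩ := lzNoPhrase_prefix p r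
  have hg := isLzNoPhrase_lzNoPhrase p hr
  have hdecr : r₁.length < r.length := by
    have := List.length_pos_iff.mpr hg.1
    rw [← hr₁, List.length_append]
    omega
  rw [lzNoAux_of_append hr hr₁, List.length_cons, Nat.add_comm]
  have h := hg.lzNoParsable.append (lzNoParsable_lzNoAux (p ++ lzNoPhrase p r) r₁)
  rwa [hr₁] at h
termination_by r.length

/-- If the greedy phrase `u ++ a'` from `p` overshoots `u`, its tail `a'` is a factor of `p`,
so the greedy phrase from `p ++ u` reaches at least as far. -/
lemma length_lzNoAux_append_le (p u r : List α) :
    (lzNoAux (p ++ u) r).length ≤ (lzNoAux p (u ++ r)).length := by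
  induction hn : (u ++ r).length using Nat.strong_induction_on generalizing p u r with
  | _ n ih =>
  rcases eq_or_ne u [] with rfl | hu
  · simp
  have hur : u ++ r ≠ [] := by simp [hu]
  have hg := isLzNoPhrase_lzNoPhrase p hur
  obtain ⟨r₁, hr₁⟩ := lzNoPhrase_prefix p (u ++ r)
  rw [lzNoAux_of_append hur hr₁, List.length_cons]
  generalize lzNoPhrase p (u ++ r) = g at hg hr₁ ⊢
  have hg_pos := List.length_pos_iff.mpr hg.1
  have hu_pos := List.length_pos_iff.mpr hu
  rcases List.append_eq_append_iff.mp hr₁ with ⟨c, rfl, rfl⟩ | ⟨a', rfl, rfl⟩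
  · have := ih (c ++ r).length
      (by simp only [List.append_assoc, List.length_append] at hn ⊢; omega) (p ++ g) c r rfl
    simp only [List.append_assoc] at this ⊢
    omega
  rcases eq_or_ne a' [] with rfl | ha'
  · simp
  have ha : IsLzNoPhrase (p ++ u) a' := by
    refine ⟨ha', Or.inr ?_⟩
    rcases hg.2 with hone | hcopy
    · have := List.length_pos_iff.mpr ha'
      simp only [List.length_append] at hone
      omega
    · exact (List.suffix_append u a').isInfix.trans
        (hcopy.trans (List.prefix_append p u).isInfix)
  have hr : a' ++ r₁ ≠ [] := by simp [ha']
  obtain ⟨x, hx⟩ := ha.prefix_lzNoPhrase (List.prefix_append a' r₁)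
  obtain ⟨r₂, hr₂⟩ := lzNoPhrase_prefix (p ++ u) (a' ++ r₁)
  rw [lzNoAux_of_append hr hr₂, List.length_cons, ← hx]
  rw [← hx, List.append_assoc, List.append_cancel_left_eq] at hr₂
  subst hr₂
  have := ih (x ++ r₂).length
    (by simp only [List.length_append] at hn ⊢; omega) (p ++ u ++ a') x r₂ rfl
  simp only [List.append_assoc] at this ⊢
  omega

lemma length_lzNoAux_le {p r : List α} {n : ℕ} (h : LzNoParsable p r n) :
    (lzNoAux p r).length ≤ n := by
  obtain ⟨F, hF, rfl, hlen⟩ := h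
  refine le_trans ?_ hlen
  clear hlen
  induction F generalizing p with
  | nil => simp
  | cons f F ih =>
    obtain ⟨hf, hF⟩ := hF
    have hr : f ++ F.flatten ≠ [] := by simp [hf.1]
    obtain ⟨v, hv⟩ := hf.prefix_lzNoPhrase (List.prefix_append f F.flatten)
    obtain ⟨r₁, hr₁⟩ := lzNoPhrase_prefix p (f ++ F.flatten)
    rw [List.flatten_cons, lzNoAux_of_append hr hr₁, List.length_cons, List.length_cons, ← hv]
    rw [← hv, List.append_assoc, List.append_cancel_left_eq] at hr₁
    apply Nat.succ_le_succ
    calc (lzNoAux (p ++ (f ++ v)) r₁).length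
        ≤ (lzNoAux (p ++ f) (v ++ r₁)).length := by
          simpa only [List.append_assoc] using length_lzNoAux_append_le (p ++ f) v r₁
      _ ≤ F.length := by simpa only [hr₁] using ih hF

/-- if the greedy LZ77 parse (without overlaps) of `s` has `z`
phrases, then the greedy LZ77 parse (without overlaps) of the difference
string `d`, `d i = s (i+1) - s i`, has at most `2·z` phrases. -/
theorem lzNo_diff_le_two_mul (s : List ℤ) :
    (lzNo (List.zipWith (fun a b => b - a) s s.tail)).length ≤ 2 * (lzNo s).length := by
  have hs : LzNoParsable [] s (lzNo s).length := lzNoParsable_lzNoAux [] s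
  exact length_lzNoAux_le (hs.zipWithTail fun a b => b - a)
end

section
/- The greedy LZ77 parse (without overlaps) achieves the minimum number of phrases among all left-to-right parses in which each phrase is a single symbol or occurs entirely earlier in the string. -/
variable {α : Type*} [DecidableEq α]

/-- A valid left-to-right parse without overlaps: the phrases concatenate to
`s`, and each phrase is a single symbol or occurs entirely in the preceding
phrases. -/
def IsValidParse {α : Type*} (s : List α) (P : List (List α)) : Prop :=
  P.flatten = s ∧
  ∀ pre f suf, P = pre ++ [f] ++ suf →
    f.length = 1 ∨ (f ≠ [] ∧ f <:+: pre.flatten)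

/-- Validity of a parse tail relative to an already-parsed prefix `q`. -/
def ValidFrom {α : Type*} (q : List α) (P : List (List α)) : Prop :=
  ∀ pre f suf, P = pre ++ [f] ++ suf →
    f.length = 1 ∨ (f ≠ [] ∧ f <:+: (q ++ pre.flatten))

lemma validFrom_tail {α : Type*} {q f : List α} {P : List (List α)}
    (h : ValidFrom q (f :: P)) : ValidFrom (q ++ f) P := by
  intro pre g suf hPg
  have := h (f :: pre) g suf (by simp [hPg])
  simpa [List.append_assoc] using this

lemma lzNo_key {α : Type*} [DecidableEq α] :
    ∀ (P : List (List α)) (p' p r : List α), p' <+: p →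
      p' ++ P.flatten = p ++ r → ValidFrom p' P →
      (lzNoAux p r).length ≤ P.length := by
  intro P
  induction P with
  | nil =>
    intro p' p r hpre heq _
    have hlen : p'.length ≤ p.length := hpre.length_le
    have : r = [] := by
      have := congrArg List.length heq
      simp at this
      have : r.length = 0 := by omega
      exact List.length_eq_zero_iff.mp this
    subst this
    simp [lzNoAux]
  | cons f P' ih =>
    intro p' p r hpre heq hval
    cases r with
    | nil => simp [lzNoAux]
    | cons a r' =>
      -- d is how far the end of phrase f extends past position |p|
      set d : ℕ := p'.length + f.length - p.length with hd
      have hplen : p'.length ≤ p.length := hpre.length_le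
      have hpf : p' ++ f <+: p ++ (a :: r') := by
        refine ⟨P'.flatten, ?_⟩
        simpa [List.append_assoc] using heq
      have hlensum : p'.length + f.length + P'.flatten.length
          = p.length + (a :: r').length := by
        have := congrArg List.length heq
        simpa [List.length_append, add_assoc] using this
      have hdr : d ≤ (a :: r').length := by omega
      -- key claim: d ≤ 1 or d ≤ lzNoLen p (a :: r')
      have hkey : d ≤ 1 ∨ d ≤ lzNoLen p (a :: r') := by
        rcases hval [] f P' rfl with hone | ⟨hne, hinf⟩
        · left; simp [hone] at hd ⊢; omega
        · rcases Nat.eq_zero_or_pos d with h0 | hdpos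
          · left; omega
          · right
            -- extract the suffix of f that remains to be read
            have hplef : p.length ≤ (p' ++ f).length := by
              simp [List.length_append]; omega
            have hp : p <+: p' ++ f :=
              List.prefix_of_prefix_length_le ⟨a :: r', rfl⟩ hpf hplef
            obtain ⟨t, ht⟩ := hp
            have htlen : t.length = d := by
              have := congrArg List.length ht
              simp [List.length_append] at this
              omega
            have htpre : t <+: (a :: r') := by
              have : p ++ t <+: p ++ (a :: r') := ht ▸ hpf
              exact (List.prefix_append_right_inj p).mp this
            have hteq : t = (a :: r').take d := by
              have := List.prefix_iff_eq_take.mp htpre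
              rwa [htlen] at this
            -- t is a suffix of f
            obtain ⟨u, hu⟩ := hpre
            have huf : u ++ t = f := by
              have : p' ++ (u ++ t) = p' ++ f := by
                rw [← List.append_assoc, hu, ht]
              exact List.append_cancel_left this
            have htsuf : t <:+ f := ⟨u, huf⟩
            have hp'p : p' <:+: p := ⟨[], u, by simpa using hu⟩
            have hinf' : f <:+: p' := by simpa using hinf
            have htinf : t <:+: p := htsuf.isInfix.trans (hinf'.trans hp'p)
            refine Nat.le_findGreatest hdr ?_
            refine ⟨hdpos, ?_⟩
            rw [← hteq]; exact htinf
      -- now one greedy step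
      have hstep : ∀ (g : ℕ), 1 ≤ g → d ≤ g →
          (lzNoAux (p ++ (a :: r').take g) ((a :: r').drop g)).length ≤ P'.length := by
        intro g hg1 hdg
        apply ih (p' ++ f) (p ++ (a :: r').take g) ((a :: r').drop g)
        · apply List.prefix_of_prefix_length_le hpf
          · exact ⟨(a :: r').drop g, by simp⟩
          · simp only [List.length_append, List.length_take, List.length_cons]
            simp only [List.length_cons] at hlensum
            omega
        · simp only [List.append_assoc, List.take_append_drop]
          simpa [List.append_assoc] using heq
        · exact validFrom_tail hval
      by_cases hL : lzNoLen p (a :: r') = 0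
      · have hd1 : d ≤ 1 := by rcases hkey with h | h <;> omega
        rw [lzNoAux, dif_pos hL]
        simp only [List.length_cons, Nat.add_le_add_iff_right]
        have := hstep 1 le_rfl hd1
        simpa using this
      · have hL1 : 1 ≤ lzNoLen p (a :: r') := Nat.pos_of_ne_zero hL
        have hdL : d ≤ lzNoLen p (a :: r') := by rcases hkey with h | h <;> omega
        rw [lzNoAux, dif_neg hL]
        simp only [List.length_cons, Nat.add_le_add_iff_right]
        exact hstep _ hL1 hdL

/-- the greedy LZ77 parse (without overlaps) has the minimum
number of phrases among all valid left-to-right parses. -/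
theorem lzNo_minimal {α : Type*} [DecidableEq α] (s : List α)
    (P : List (List α)) (hP : IsValidParse s P) :
    (lzNo s).length ≤ P.length := by
  obtain ⟨hflat, hvalid⟩ := hP
  apply lzNo_key P [] [] s (List.nil_prefix)
  · simpa using hflat
  · intro pre f suf h
    simpa using hvalid pre f suf h
end

section
/- For the string s = x^{k₁} |₁ x^{k₂} |₂ ⋯ |_{p-1} x^{k_p} with distinct positive integers k_i, k₁ maximal, the LZ77 parse without overlaps has O(p + log k₁) phrases. -/
variable {α : Type*} [DecidableEq α]

/-- The string `x^{k 0} |₁ x^{k 1} |₂ ⋯ |_{p-1} x^{k (p-1)}` over the alphabet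
`ℕ`, where `x` is the symbol `0` and the `i`-th separator is the symbol `i+1`. -/
def sepString (p : ℕ) (k : Fin p → ℕ) : List ℕ :=
  ((List.ofFn (fun i : Fin p => List.replicate (k i) 0 ++ [(i : ℕ) + 1])).flatten).dropLast

/-!
After the fresh first symbol `x`, the greedy parse of the run `x^{k₁-1}` against the parsed
prefix `x^t` takes either all of the run or a copy of `x^t`, which doubles the prefix; so the run
costs at most `log₂ k₁ + 1` phrases. Each later block `|ᵢ x^{kᵢ}` then costs exactly two phrases:
the separator is fresh, and `x^{kᵢ}` occurs inside `x^{k₁}` but cannot be extended past the next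
separator, which is fresh as well.
-/

theorem lzNoLen_eq {P t : List α} {m : ℕ} (hm : 0 < m) (hmt : m ≤ t.length)
    (hin : t.take m <:+: P) (hout : m < t.length → ¬ t.take (m + 1) <:+: P) :
    lzNoLen P t = m := by
  refine Nat.findGreatest_eq_iff.mpr ⟨hmt, fun _ => ⟨hm, hin⟩, ?_⟩
  rintro L hmL hLt ⟨-, hL⟩
  exact hout (by omega) ((List.take_prefix_take_left hmL).isInfix.trans hL)

theorem lzNoLen_replicate_append {P tl : List α} {x : α} {m : ℕ} (hm : 0 < m)
    (hin : List.replicate m x <:+: P) (htl : ∀ a ∈ tl.head?, a ∉ P) :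
    lzNoLen P (List.replicate m x ++ tl) = m := by
  refine lzNoLen_eq hm (by simp) (by simpa [List.take_left'] using hin) fun hlt hinf => ?_
  obtain ⟨a, tl, rfl⟩ := List.exists_cons_of_length_pos (by simpa using hlt)
  refine htl a rfl (hinf.subset ?_)
  simp [List.take_append, List.take_replicate]

theorem lzNoLen_replicate_replicate_append {tl : List α} {x : α} {t n : ℕ} (ht : 0 < t)
    (htn : t < n) :
    lzNoLen (List.replicate t x) (List.replicate n x ++ tl) = t := by
  refine lzNoLen_eq ht (by simp; omega) ?_ fun _ hinf => ?_
  · simp [List.take_append, List.take_replicate, htn.le]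
  have := hinf.length_le
  simp [List.take_append, List.take_replicate] at this
  omega

theorem lzNoAux_cons_of_not_mem {P r : List α} {a : α} (ha : a ∉ P) :
    lzNoAux P (a :: r) = [a] :: lzNoAux (P ++ [a]) r := by
  have : lzNoLen P (a :: r) = 0 := by
    refine Nat.findGreatest_eq_zero_iff.mpr fun n hn _ ⟨_, hinf⟩ => ha (hinf.subset ?_)
    obtain ⟨n, rfl⟩ := Nat.exists_eq_succ_of_ne_zero hn.ne'
    simp
  rw [lzNoAux, dif_pos this]

theorem lzNoAux_append_of_lzNoLen_eq {P c tl : List α} (hc : c ≠ [])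
    (hL : lzNoLen P (c ++ tl) = c.length) :
    lzNoAux P (c ++ tl) = c :: lzNoAux (P ++ c) tl := by
  obtain ⟨a, c, rfl⟩ := List.exists_cons_of_ne_nil hc
  rw [List.cons_append] at hL ⊢
  rw [lzNoAux, dif_neg (by simp [hL]), hL, ← List.cons_append,
    List.take_left' rfl, List.drop_left' rfl]

theorem length_lzNoAux_replicate_append_add_log_le {x : α} {tl : List α}
    (htl : ∀ a ∈ tl.head?, a ≠ x) (n : ℕ) {t : ℕ} (ht : 0 < t) :
    (lzNoAux (List.replicate t x) (List.replicate n x ++ tl)).length + Nat.log 2 t ≤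
      Nat.log 2 (n + t) + 1 + (lzNoAux (List.replicate (t + n) x) tl).length := by
  induction n using Nat.strong_induction_on generalizing t with
  | _ n ih =>
  have hlog_le : Nat.log 2 t ≤ Nat.log 2 (n + t) := Nat.log_mono_right (by omega)
  rcases Nat.eq_zero_or_pos n with rfl | hn
  · simp only [List.replicate_zero, List.nil_append, Nat.add_zero]
    omega
  rcases le_or_gt n t with hnt | htn
  · have hL : lzNoLen (List.replicate t x) (List.replicate n x ++ tl) = n :=
      lzNoLen_replicate_append hn (List.infix_replicate_iff.mpr ⟨by simpa, by simp⟩)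
        fun a ha hmem => htl a ha (List.eq_of_mem_replicate hmem)
    rw [lzNoAux_append_of_lzNoLen_eq (by simp; omega) (by simpa using hL),
      ← List.replicate_add, List.length_cons]
    omega
  · have hsplit : List.replicate n x ++ tl
        = List.replicate t x ++ (List.replicate (n - t) x ++ tl) := by
      rw [← List.append_assoc, ← List.replicate_add, Nat.add_sub_cancel' htn.le]
    have hL := lzNoLen_replicate_replicate_append (tl := tl) (x := x) ht htn
    rw [hsplit] at hL ⊢
    rw [lzNoAux_append_of_lzNoLen_eq (by simp; omega) (by simpa using hL),
      ← List.replicate_add, List.length_cons]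
    have hdouble : Nat.log 2 (t + t) = Nat.log 2 t + 1 := by
      rw [← two_mul, mul_comm, Nat.log_mul_base (by norm_num) ht.ne']
    have := ih (n - t) (by omega) (t := t + t) (by omega)
    rw [hdouble, show n - t + (t + t) = n + t by omega,
      show t + t + (n - t) = t + n by omega] at this
    omega

/-- `sepTail i [m₁, m₂, …] = |ᵢ x^{m₁} |ᵢ₊₁ x^{m₂} ⋯`,
with `x = 0` and `|ⱼ = j` as in `sepString`. -/
def sepTail : ℕ → List ℕ → List ℕ
  | _, [] => []
  | i, m :: ms => i :: (List.replicate m 0 ++ sepTail (i + 1) ms)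

theorem length_lzNoAux_sepTail (ms : List ℕ) {i K : ℕ} {P : List ℕ}
    (hP : List.replicate K 0 <:+: P) (hms : ∀ m ∈ ms, 0 < m ∧ m ≤ K)
    (hsep : ∀ j, i ≤ j → j ∉ P) :
    (lzNoAux P (sepTail i ms)).length = 2 * ms.length := by
  induction ms generalizing i P with
  | nil => simp [sepTail, lzNoAux]
  | cons m ms ih =>
    obtain ⟨hm, hmK⟩ := hms m List.mem_cons_self
    have hhead : ∀ a ∈ (sepTail (i + 1) ms).head?, a ∉ P ++ [i] := by
      cases ms <;> simp [sepTail, hsep]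
    have hrun : List.replicate m 0 <:+: P ++ [i] :=
      ((List.infix_replicate_iff.mpr ⟨by simpa, by simp⟩).trans hP).trans
        (List.prefix_append P [i]).isInfix
    have hL := lzNoLen_replicate_append hm hrun hhead
    rw [sepTail, lzNoAux_cons_of_not_mem (hsep i le_rfl),
      lzNoAux_append_of_lzNoLen_eq (by simp; omega) (by simpa using hL), List.length_cons,
      List.length_cons, ih (P := P ++ [i] ++ List.replicate m 0)
        (hP.trans ⟨[], [i] ++ List.replicate m 0, by simp⟩)
        (fun m' hm' => hms m' (List.mem_cons_of_mem _ hm'))]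
    · simp only [List.length_cons]
      ring
    · intro j hj
      simp only [List.mem_append, List.mem_singleton, List.mem_replicate]
      exact not_or.mpr ⟨not_or.mpr ⟨hsep j (by omega), by omega⟩, by omega⟩

theorem flatten_ofFn_replicate_append_singleton (q off : ℕ) (k : Fin (q + 1) → ℕ) :
    (List.ofFn fun i : Fin (q + 1) => List.replicate (k i) 0 ++ [off + i + 1]).flatten =
      List.replicate (k 0) 0 ++ sepTail (off + 1) (List.ofFn fun i : Fin q => k i.succ) ++
        [off + q + 1] := by
  induction q generalizing off with
  | zero => simp [sepTail]
  | succ q ih =>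
    have := ih (off + 1) fun i => k i.succ
    simp only [show ∀ j : ℕ, off + 1 + j = off + (j + 1) by omega] at this
    rw [List.ofFn_succ, List.flatten_cons]
    simp only [Fin.val_succ, Fin.val_zero]
    rw [this, List.ofFn_succ (n := q), sepTail]
    simp

theorem sepString_succ (q : ℕ) (k : Fin (q + 1) → ℕ) :
    sepString (q + 1) k =
      List.replicate (k 0) 0 ++ sepTail 1 (List.ofFn fun i : Fin q => k i.succ) := by
  have := congrArg List.dropLast (flatten_ofFn_replicate_append_singleton q 0 k)
  simpa [sepString] using this

theorem length_lzNo_sepString_le (q : ℕ) (k : Fin (q + 1) → ℕ) (hpos : ∀ i, 0 < k i)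
    (hmax : ∀ i, k i ≤ k 0) :
    (lzNo (sepString (q + 1) k)).length ≤ 2 * (q + 1) + Nat.log 2 (k 0) := by
  obtain ⟨n, hn⟩ := Nat.exists_eq_add_one_of_ne_zero (hpos 0).ne'
  rw [lzNo, sepString_succ]
  set ms := List.ofFn fun i : Fin q => k i.succ
  have hhead : ∀ a ∈ (sepTail 1 ms).head?, a ≠ 0 := by
    cases ms <;> simp [sepTail]
  have hrun := length_lzNoAux_replicate_append_add_log_le hhead n one_pos
  have htail := length_lzNoAux_sepTail ms (i := 1) (K := k 0) (P := List.replicate (1 + n) 0)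
    (List.infix_replicate_iff.mpr ⟨by simp [hn], by simp⟩)
    (by simp [ms, List.mem_ofFn, hpos, hmax])
    (by simp [List.mem_replicate]; omega)
  rw [hn, List.replicate_succ, List.cons_append, lzNoAux_cons_of_not_mem List.not_mem_nil,
    List.length_cons]
  rw [Nat.log_one_right] at hrun
  change (lzNoAux (List.replicate 1 0) _).length + 1 ≤ _
  have : ms.length = q := List.length_ofFn
  omega

/-- for `s = x^{k₁} |₁ x^{k₂} |₂ ⋯ |_{p-1} x^{k_p}` with the
`k i` distinct positive integers and `k₁ = k 0` maximal, the greedy LZ77 parse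
without overlaps has `O(p + log k₁)` phrases. -/
theorem lzNo_sepString_le :
    ∃ c : ℝ, 0 < c ∧ ∀ (p : ℕ) (hp : 0 < p) (k : Fin p → ℕ),
      (∀ i, 0 < k i) → Function.Injective k → (∀ i, k i ≤ k ⟨0, hp⟩) →
      ((lzNo (sepString p k)).length : ℝ) ≤ c * (p + Real.log (k ⟨0, hp⟩)) := by
  refine ⟨2, two_pos, fun p hp k hpos _ hmax => ?_⟩
  obtain ⟨q, rfl⟩ := Nat.exists_eq_add_one_of_ne_zero hp.ne'
  have hcount : ((lzNo (sepString (q + 1) k)).length : ℝ) ≤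
      2 * (q + 1 : ℕ) + Real.logb 2 (k ⟨0, hp⟩) := by
    calc _ ≤ ((2 * (q + 1) + Nat.log 2 (k ⟨0, hp⟩) : ℕ) : ℝ) := by
          exact_mod_cast length_lzNo_sepString_le q k hpos hmax
      _ ≤ _ := by
          push_cast
          gcongr
          exact Real.natLog_le_logb _ _
  have hlogb : Real.logb 2 (k ⟨0, hp⟩) ≤ 2 * Real.log (k ⟨0, hp⟩) := by
    rw [Real.logb, div_le_iff₀ (Real.log_pos one_lt_two)]
    nlinarith [Real.log_two_gt_d9, Real.log_nonneg (Nat.one_le_cast.mpr (hpos ⟨0, hp⟩))]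
  linarith
end
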